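/- Frohman–Gelca Product-to-Sum formula (in the oriented model): let u, w ∈ ℤ × ℤ be nonzero, let n = gcd of the two coordinates of u and m = gcd of the two coordinates of w, and write u = n • u₀ and w = m • w₀ with u₀, w₀ primitive lattice vectors. Then in the R-algebra 𝒜, (Polynomial.aeval (e_(u₀) + e_(−u₀)) (P n)) * (Polynomial.aeval (e_(w₀) + e_(−w₀)) (P m)) = A^(D u w) • (e_(u−w) + e_(−(u−w))) + A^(−D u w) • (e_(u+w) + e_(−(u+w))). (This is the image under the paper's isomorphism ψ of Frohman–Gelca's formula (a,b)_T * (c,d)_T = A^(ad−bc) (a−c,b−d)_T + A^(−(ad−bc)) (a+c,b+d)_T, where (a,b)_T denotes the Chebyshev polynomial T_gcd(a,b) applied to the primitive curve (a/gcd, b/gcd) in the Kauffman bracket skein algebra of the torus.) -/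

import Mathlib

open Finsupp LaurentPolynomial

noncomputable section

/-- `R = ℤ[A,A⁻¹]`, the ring of Laurent polynomials over `ℤ`; `A = LaurentPolynomial.T 1`. -/
abbrev R := LaurentPolynomial ℤ

/-- The determinant pairing `D (a,b) (c,d) = a*d - b*c`. -/
def D (v w : ℤ × ℤ) : ℤ := v.1 * w.2 - v.2 * w.1

/-- The unique `R`-bilinear multiplication on the free `R`-module `(ℤ × ℤ) →₀ R` with
`e_v * e_w = A^(-(D v w)) • e_(v+w)` on basis vectors. -/
def mulF : ((ℤ × ℤ) →₀ R) →ₗ[R] ((ℤ × ℤ) →₀ R) →ₗ[R] ((ℤ × ℤ) →₀ R) :=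
  Finsupp.lsum R fun v : ℤ × ℤ => LinearMap.toSpanSingleton R _
    (Finsupp.lsum R fun w : ℤ × ℤ => LinearMap.toSpanSingleton R _
      (Finsupp.single (v + w) (T (-(D v w)))))

lemma mulF_single_single (v w : ℤ × ℤ) (r s : R) :
    mulF (Finsupp.single v r) (Finsupp.single w s) =
      Finsupp.single (v + w) (r * s * T (-(D v w))) := by
  rw [mulF, Finsupp.lsum_single, LinearMap.toSpanSingleton_apply, LinearMap.smul_apply,
    Finsupp.lsum_single, LinearMap.toSpanSingleton_apply, Finsupp.smul_single,
    Finsupp.smul_single, smul_eq_mul, smul_eq_mul, ← mul_assoc]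

lemma mulF_assoc (x y z : (ℤ × ℤ) →₀ R) : mulF (mulF x y) z = mulF x (mulF y z) := by
  induction x using Finsupp.induction_linear with
  | zero => simp only [map_zero, LinearMap.zero_apply]
  | add a b ha hb => simp only [map_add, LinearMap.add_apply, ha, hb]
  | single v r =>
    induction y using Finsupp.induction_linear with
    | zero => simp only [map_zero, LinearMap.zero_apply, LinearMap.map_zero]
    | add a b ha hb => simp only [map_add, LinearMap.add_apply, LinearMap.map_add, ha, hb]
    | single w s =>
      induction z using Finsupp.induction_linear with
      | zero => simp only [map_zero, LinearMap.map_zero]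
      | add a b ha hb => simp only [map_add, LinearMap.map_add, ha, hb]
      | single u t =>
        rw [mulF_single_single, mulF_single_single, mulF_single_single,
          mulF_single_single, add_assoc]
        congr 1
        have h : (T (-(D v w)) : R) * T (-(D (v + w) u)) =
            T (-(D w u)) * T (-(D v (w + u))) := by
          rw [← T_add, ← T_add]
          congr 1
          simp only [D, Prod.fst_add, Prod.snd_add]
          ring
        linear_combination (r * s * t) * h

lemma mulF_one_left (x : (ℤ × ℤ) →₀ R) :
    mulF (Finsupp.single (0 : ℤ × ℤ) (1 : R)) x = x := by
  induction x using Finsupp.induction_linear with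
  | zero => simp only [LinearMap.map_zero]
  | add a b ha hb => simp only [LinearMap.map_add, ha, hb]
  | single w s =>
      rw [mulF_single_single]
      have h : D (0 : ℤ × ℤ) w = 0 := by simp [D]
      rw [h, neg_zero, T_zero, mul_one, one_mul, zero_add]

lemma mulF_one_right (x : (ℤ × ℤ) →₀ R) :
    mulF x (Finsupp.single (0 : ℤ × ℤ) (1 : R)) = x := by
  induction x using Finsupp.induction_linear with
  | zero => simp only [map_zero, LinearMap.zero_apply]
  | add a b ha hb => simp only [map_add, LinearMap.add_apply, ha, hb]
  | single w s =>
      rw [mulF_single_single]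
      have h : D w (0 : ℤ × ℤ) = 0 := by simp [D]
      rw [h, neg_zero, T_zero, mul_one, mul_one, add_zero]

/-- The oriented skein module `𝒜` of the torus: the free `R`-module `(ℤ × ℤ) →₀ R`. -/
def 𝒜 : Type := (ℤ × ℤ) →₀ R

instance : AddCommGroup 𝒜 := inferInstanceAs (AddCommGroup ((ℤ × ℤ) →₀ R))
instance : Module R 𝒜 := inferInstanceAs (Module R ((ℤ × ℤ) →₀ R))

/-- `𝒜` as an associative unital ring, with the multiplication determined by
`e_v * e_w = A^(-(D v w)) • e_(v+w)`. -/
instance : Ring 𝒜 :=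
  { (inferInstance : AddCommGroup 𝒜) with
    mul := fun x y => mulF x y
    one := Finsupp.single (0 : ℤ × ℤ) (1 : R)
    mul_assoc := mulF_assoc
    one_mul := mulF_one_left
    mul_one := mulF_one_right
    left_distrib := fun a b c => LinearMap.map_add (mulF a) b c
    right_distrib := fun a b c => by
      show mulF (a + b) c = mulF a c + mulF b c
      exact LinearMap.map_add₂ mulF a b c
    zero_mul := fun a => by show mulF 0 a = 0; exact LinearMap.map_zero₂ mulF a
    mul_zero := fun a => by show mulF a 0 = 0; exact (mulF a).map_zero }

/-- `𝒜` as an `R`-algebra. -/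
instance : Algebra R 𝒜 :=
  Algebra.ofModule
    (fun r x y => by
      show mulF (r • x) y = r • mulF x y
      exact LinearMap.map_smul₂ mulF r x y)
    (fun r x y => by
      show mulF x (r • y) = r • mulF x y
      exact (mulF x).map_smul r y)

/-- The basis element `e_v` of `𝒜` (the oriented multicurve class `γ_v`). -/
def e (v : ℤ × ℤ) : 𝒜 := Finsupp.single v 1

/-- The multiplication of `𝒜` on the basis: `e_v * e_w = A^(-(D v w)) • e_(v+w)`. -/
lemma e_mul_e (v w : ℤ × ℤ) : e v * e w = (T (-(D v w)) : R) • e (v + w) := by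
  show mulF (Finsupp.single v 1) (Finsupp.single w 1) =
    T (-(D v w)) • (Finsupp.single (v + w) (1 : R))
  rw [mulF_single_single, one_mul, one_mul]
  exact (Finsupp.smul_single_one (v + w) (T (-(D v w)) : R)).symm

lemma one_def : (1 : 𝒜) = e (0, 0) := rfl


/-- The normalized Chebyshev polynomials of the first kind:
`P 0 = 2`, `P 1 = X`, `P (n+2) = X * P (n+1) - P n`. -/
def P : ℕ → Polynomial ℤ
  | 0 => 2
  | 1 => Polynomial.X
  | n + 2 => Polynomial.X * P (n + 1) - P n

/-
In any ring, `P n (x + y) = xⁿ + yⁿ` whenever `y` is a two-sided inverse of `x`, by the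
three-term recurrence. Since `D` vanishes on parallel vectors, `e (-v)` is inverse to `e v` and
`e v ^ n = e (n • v)`, so the left-hand side is `(e u + e (-u)) * (e w + e (-w))`; expanding
this product with `e_mul_e`, using that `D` is odd in each argument, gives the four terms on
the right.
-/

open Polynomial in
theorem aeval_add_inv_P {A : Type*} [Ring A] {x y : A} (hxy : x * y = 1)
    (hyx : y * x = 1) : ∀ n, aeval (x + y) (P n) = x ^ n + y ^ n
  | 0 => by
    rw [show P 0 = 2 from rfl, map_ofNat, pow_zero, pow_zero, one_add_one_eq_two]
  | 1 => by simp [P]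
  | n + 2 => by
    have hxy' : x * y ^ (n + 1) = y ^ n := by rw [pow_succ', ← mul_assoc, hxy, one_mul]
    have hyx' : y * x ^ (n + 1) = x ^ n := by rw [pow_succ', ← mul_assoc, hyx, one_mul]
    rw [show P (n + 2) = X * P (n + 1) - P n from rfl, map_sub, map_mul, aeval_X,
      aeval_add_inv_P hxy hyx (n + 1), aeval_add_inv_P hxy hyx n,
      add_mul, mul_add, mul_add, hxy', hyx', ← pow_succ', ← pow_succ']
    abel

theorem D_self (v : ℤ × ℤ) : D v v = 0 := by
  simp only [D]; ring

theorem D_nsmul_right (v w : ℤ × ℤ) (n : ℕ) : D v (n • w) = n * D v w := by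
  simp only [D, Prod.smul_fst, Prod.smul_snd]
  simp only [nsmul_eq_mul]; ring

theorem D_neg_left (v w : ℤ × ℤ) : D (-v) w = -D v w := by
  simp only [D, Prod.fst_neg, Prod.snd_neg]; ring

theorem D_neg_right (v w : ℤ × ℤ) : D v (-w) = -D v w := by
  simp only [D, Prod.fst_neg, Prod.snd_neg]; ring

theorem e_pow (v : ℤ × ℤ) (n : ℕ) : e v ^ n = e (n • v) := by
  induction n with
  | zero => rw [pow_zero, zero_smul, one_def]; rfl
  | succ n ih =>
    rw [pow_succ', ih, e_mul_e, D_nsmul_right, D_self, mul_zero, neg_zero, T_zero, one_smul,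
      succ_nsmul']

theorem e_mul_e_neg (v : ℤ × ℤ) : e v * e (-v) = 1 := by
  rw [e_mul_e, D_neg_right, D_self, neg_zero, neg_zero, T_zero, one_smul, add_neg_cancel,
    one_def]; rfl

theorem aeval_e_add_e_neg_P (v : ℤ × ℤ) (n : ℕ) :
    Polynomial.aeval (e v + e (-v)) (P n) = e (n • v) + e (-(n • v)) := by
  have hinv : e (-v) * e v = 1 := by simpa only [neg_neg] using e_mul_e_neg (-v)
  rw [aeval_add_inv_P (e_mul_e_neg v) hinv, e_pow, e_pow, smul_neg]

theorem e_add_e_neg_mul_e_add_e_neg (u w : ℤ × ℤ) :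
    (e u + e (-u)) * (e w + e (-w)) =
      (T (D u w) : R) • (e (u - w) + e (-(u - w))) +
        (T (-(D u w)) : R) • (e (u + w) + e (-(u + w))) := by
  simp only [add_mul, mul_add, e_mul_e, D_neg_left, D_neg_right, smul_add, sub_eq_add_neg,
    neg_add, neg_neg]
  abel

theorem frohman_gelca_product_to_sum_general (u w : ℤ × ℤ) (n m : ℕ) (u₀ w₀ : ℤ × ℤ)
    (hu₀ : u = n • u₀) (hw₀ : w = m • w₀) :
    (Polynomial.aeval (e u₀ + e (-u₀)) (P n)) * (Polynomial.aeval (e w₀ + e (-w₀)) (P m)) =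
      (T (D u w) : R) • (e (u - w) + e (-(u - w))) +
        (T (-(D u w)) : R) • (e (u + w) + e (-(u + w))) := by
  rw [aeval_e_add_e_neg_P, aeval_e_add_e_neg_P, ← hu₀, ← hw₀]
  exact e_add_e_neg_mul_e_add_e_neg u w

/-- The Frohman–Gelca Product-to-Sum formula, in the oriented model: writing the nonzero
lattice vectors `u = n • u₀`, `w = m • w₀` with `n`, `m` the gcds of the coordinates and
`u₀`, `w₀` primitive, the product of the Chebyshev evaluations `P n (e u₀ + e (-u₀))` and
`P m (e w₀ + e (-w₀))` equals
`A^(D u w) • (e (u-w) + e (-(u-w))) + A^(-(D u w)) • (e (u+w) + e (-(u+w)))`. -/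
theorem frohman_gelca_product_to_sum (u w : ℤ × ℤ) (hu : u ≠ 0) (hw : w ≠ 0)
    (n m : ℕ) (hn : n = Int.gcd u.1 u.2) (hm : m = Int.gcd w.1 w.2)
    (u₀ w₀ : ℤ × ℤ) (hu₀ : u = n • u₀) (hw₀ : w = m • w₀)
    (hu₀prim : Int.gcd u₀.1 u₀.2 = 1) (hw₀prim : Int.gcd w₀.1 w₀.2 = 1) :
    (Polynomial.aeval (e u₀ + e (-u₀)) (P n)) * (Polynomial.aeval (e w₀ + e (-w₀)) (P m)) =
      (T (D u w) : R) • (e (u - w) + e (-(u - w))) +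
        (T (-(D u w)) : R) • (e (u + w) + e (-(u + w))) :=
  frohman_gelca_product_to_sum_general u w n m u₀ w₀ hu₀ hw₀

end
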